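/- Let (P_θ)_{θ∈Θ} be a statistical model on a sample space Ω (a Markov kernel from a measurable space Θ to a measurable space Ω) and let κ ∈ (0,1). (a) If f is a p-function w.r.t. the model (P_θ), then ω ↦ κ·f(ω)^{κ−1} (with 0^{κ−1} = ∞) is an e-function w.r.t. the model, i.e. ∫ κ·f^{κ−1} dP_θ ≤ 1 for every θ ∈ Θ. (b) If f is an e-function w.r.t. the model, then ω ↦ min(1, 1/f(ω)) is a p-function w.r.t. the model, i.e. P_θ{ω : min(1, 1/f(ω)) ≤ ε} ≤ ε for every θ ∈ Θ and every ε > 0. -/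

import Mathlib

/-!
A p-function `f` stochastically dominates the uniform distribution on `(0, 1)`: for every lower
set `S` of `[0, ∞]`, `P_θ (f ∈ S) ≤ P_θ (f ≤ sup S) ≤ min (sup S) 1 ≤ λ (U ∈ S)`. By the layer-cake
formula, `E_θ[G(f)] ≤ ∫₀¹ G(u) du` for every antitone `G`, since the superlevel sets of `G` are
lower sets; for the calibrator `G(x) = κ x^(κ-1)` the right-hand side is `1`.
Part (b) is Markov's inequality `P_θ (f ≥ 1/ε) ≤ ε E_θ[f]`.
-/

open MeasureTheory ProbabilityTheory Set
open scoped ENNReal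

theorem volume_restrict_Ioi_setOf_ofReal_lt (x : ℝ≥0∞) :
    volume.restrict (Ioi 0) {t : ℝ | ENNReal.ofReal t < x} = x := by
  rw [Measure.restrict_apply' measurableSet_Ioi]
  induction x with
  | top => simp
  | coe r =>
    have : {t : ℝ | ENNReal.ofReal t < r} ∩ Ioi 0 = Ioo 0 (r : ℝ) := by
      ext t
      rw [mem_inter_iff, mem_Ioo, and_comm]
      exact and_congr_right fun h0 => by
        simpa using ENNReal.ofReal_lt_iff_lt_toReal (mem_Ioi.1 h0).le ENNReal.coe_ne_top
    simp [this]

theorem lintegral_eq_lintegral_meas_ofReal_lt {α : Type*} [MeasurableSpace α] (μ : Measure α)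
    [SFinite μ] {g : α → ℝ≥0∞} (hg : Measurable g) :
    ∫⁻ a, g a ∂μ = ∫⁻ t in Ioi 0, μ {a | ENNReal.ofReal t < g a} := by
  have hE : MeasurableSet {p : α × ℝ | ENNReal.ofReal p.2 < g p.1} :=
    measurableSet_lt (by fun_prop) (hg.comp measurable_fst)
  calc ∫⁻ a, g a ∂μ = ∫⁻ a, volume.restrict (Ioi 0) {t : ℝ | ENNReal.ofReal t < g a} ∂μ := by
        simp only [volume_restrict_Ioi_setOf_ofReal_lt]
    _ = μ.prod (volume.restrict (Ioi 0)) {p | ENNReal.ofReal p.2 < g p.1} :=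
        (Measure.prod_apply hE).symm
    _ = ∫⁻ t in Ioi 0, μ {a | ENNReal.ofReal t < g a} := Measure.prod_apply_symm hE

section

variable {Ω : Type*} [MeasurableSpace Ω] {μ : Measure Ω} {f : Ω → ℝ≥0∞}

theorem measure_setOf_le_le (hp : ∀ ε, 0 < ε → μ {ω | f ω ≤ ε} ≤ ε) (c : ℝ≥0∞) :
    μ {ω | f ω ≤ c} ≤ c :=
  le_of_forall_gt_imp_ge_of_dense fun ε hε =>
    (measure_mono fun _ (hω : _ ≤ c) => hω.trans hε.le).trans (hp ε (pos_of_gt hε))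

theorem measure_preimage_le_restrict_Ioo_of_isLowerSet [IsProbabilityMeasure μ]
    (hp : ∀ ε, 0 < ε → μ {ω | f ω ≤ ε} ≤ ε) {S : Set ℝ≥0∞} (hS : IsLowerSet S) :
    μ (f ⁻¹' S) ≤ volume.restrict (Ioo 0 1) (ENNReal.ofReal ⁻¹' S) := by
  set c : ℝ≥0∞ := sSup S
  have hc : μ (f ⁻¹' S) ≤ c :=
    (measure_mono fun ω (hω : f ω ∈ S) => (le_sSup hω : f ω ≤ c)).trans
      (measure_setOf_le_le hp c)
  have hIoo : Ioo 0 (min c 1).toReal ⊆ ENNReal.ofReal ⁻¹' S ∩ Ioo 0 1 := by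
    intro u ⟨hu0, hu⟩
    have hu' : ENNReal.ofReal u < min c 1 :=
      (ENNReal.ofReal_lt_iff_lt_toReal hu0.le (by simp)).2 hu
    obtain ⟨s, hs, hus⟩ := lt_sSup_iff.1 (hu'.trans_le (min_le_left _ _))
    exact ⟨hS hus.le hs, hu0, ENNReal.ofReal_lt_one.1 (hu'.trans_le (min_le_right _ _))⟩
  calc μ (f ⁻¹' S) ≤ min c 1 := le_min hc prob_le_one
    _ = volume (Ioo 0 (min c 1).toReal) := by simp
    _ ≤ volume.restrict (Ioo 0 1) (ENNReal.ofReal ⁻¹' S) := by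
        rw [Measure.restrict_apply' measurableSet_Ioo]
        exact measure_mono hIoo

theorem lintegral_comp_le_setLIntegral_Ioo_of_antitone [IsProbabilityMeasure μ] (hf : Measurable f)
    (hp : ∀ ε, 0 < ε → μ {ω | f ω ≤ ε} ≤ ε) {G : ℝ≥0∞ → ℝ≥0∞} (hG : Antitone G) :
    ∫⁻ ω, G (f ω) ∂μ ≤ ∫⁻ u in Ioo 0 1, G (ENNReal.ofReal u) := by
  rw [lintegral_eq_lintegral_meas_ofReal_lt μ (g := fun ω => G (f ω)) (hG.measurable.comp hf),
    lintegral_eq_lintegral_meas_ofReal_lt _ (g := fun u => G (ENNReal.ofReal u))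
      (hG.measurable.comp ENNReal.measurable_ofReal)]
  exact lintegral_mono fun t => measure_preimage_le_restrict_Ioo_of_isLowerSet hp
    (S := {x | ENNReal.ofReal t < G x}) fun _ _ hba ha => lt_of_lt_of_le ha (hG hba)

theorem measure_min_one_inv_le_le [IsProbabilityMeasure μ] (hf : Measurable f)
    (he : ∫⁻ ω, f ω ∂μ ≤ 1) {ε : ℝ≥0∞} (hε : 0 < ε) : μ {ω | min 1 (f ω)⁻¹ ≤ ε} ≤ ε := by
  rcases le_or_gt 1 ε with hε1 | hε1
  · exact prob_le_one.trans hε1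
  have hsub : {ω | min 1 (f ω)⁻¹ ≤ ε} ⊆ {ω | ε⁻¹ ≤ f ω} := fun ω hω => by
    simpa [hε1.not_ge, ENNReal.inv_le_iff_inv_le] using hω
  calc μ {ω | min 1 (f ω)⁻¹ ≤ ε} ≤ μ {ω | ε⁻¹ ≤ f ω} := measure_mono hsub
    _ ≤ (∫⁻ ω, f ω ∂μ) / ε⁻¹ :=
        meas_ge_le_lintegral_div hf.aemeasurable (by simpa using hε1.ne_top) (by simpa using hε.ne')
    _ = (∫⁻ ω, f ω ∂μ) * ε := by rw [div_eq_mul_inv, inv_inv]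
    _ ≤ ε := mul_le_of_le_one_left' he

end

theorem setLIntegral_Ioo_zero_one_mul_rpow_sub_one {κ : ℝ} (hκ : 0 < κ) :
    ∫⁻ u in Ioo 0 1, ENNReal.ofReal κ * ENNReal.ofReal u ^ (κ - 1) = 1 := by
  have hint : IntervalIntegrable (fun u : ℝ => κ * u ^ (κ - 1)) volume 0 1 :=
    (intervalIntegral.intervalIntegrable_rpow' (by linarith)).const_mul κ
  rw [intervalIntegrable_iff_integrableOn_Ioo_of_le zero_le_one] at hint
  calc ∫⁻ u in Ioo 0 1, ENNReal.ofReal κ * ENNReal.ofReal u ^ (κ - 1)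
      = ∫⁻ u in Ioo 0 1, ENNReal.ofReal (κ * u ^ (κ - 1)) :=
        setLIntegral_congr_fun measurableSet_Ioo fun u hu => by
          rw [ENNReal.ofReal_rpow_of_pos hu.1, ENNReal.ofReal_mul hκ.le]
    _ = ENNReal.ofReal (∫ u in (0)..1, κ * u ^ (κ - 1)) := by
        rw [intervalIntegral.integral_of_le zero_le_one, integral_Ioc_eq_integral_Ioo,
          ofReal_integral_eq_lintegral_ofReal hint]
        exact ae_restrict_of_forall_mem measurableSet_Ioo fun u hu =>
          mul_nonneg hκ.le (Real.rpow_nonneg hu.1.le _)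
    _ = 1 := by
        rw [intervalIntegral.integral_const_mul, integral_rpow (Or.inl (by linarith))]
        simp [hκ.ne', Real.zero_rpow hκ.ne']

theorem antitone_mul_rpow_sub_one {κ : ℝ} (hκ : κ < 1) (c : ℝ≥0∞) :
    Antitone fun x : ℝ≥0∞ => c * x ^ (κ - 1) := by
  intro x y hxy
  simp only [← neg_sub 1 κ, ENNReal.rpow_neg]
  gcongr

/-- relation between p-functions and e-functions w.r.t. a statistical
model `(P_θ)_{θ∈Θ}` (a Markov kernel from `Θ` to `Ω`) and `κ ∈ (0,1)`.
(a) If `f` is a p-function w.r.t. the model, then `ω ↦ κ · f(ω)^(κ-1)` is an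
e-function w.r.t. the model (in `ℝ≥0∞`, `0 ^ (κ-1) = ∞`).
(b) If `f` is an e-function w.r.t. the model, then `ω ↦ min 1 (1/f(ω))` is a
p-function w.r.t. the model. -/
theorem stmt3 {Ω Θ : Type*} [MeasurableSpace Ω] [MeasurableSpace Θ]
    (P : Kernel Θ Ω) [IsMarkovKernel P]
    (κ : ℝ) (hκ : κ ∈ Set.Ioo (0 : ℝ) 1) :
    (∀ f : Ω → ℝ≥0∞, Measurable f → (∀ ω, f ω ≤ 1) →
      (∀ θ, ∀ ε : ℝ≥0∞, 0 < ε → P θ {ω | f ω ≤ ε} ≤ ε) →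
      ∀ θ, ∫⁻ ω, ENNReal.ofReal κ * f ω ^ (κ - 1) ∂(P θ) ≤ 1) ∧
    (∀ f : Ω → ℝ≥0∞, Measurable f → (∀ θ, ∫⁻ ω, f ω ∂(P θ) ≤ 1) →
      ∀ θ, ∀ ε : ℝ≥0∞, 0 < ε → P θ {ω | min 1 (f ω)⁻¹ ≤ ε} ≤ ε) := by
  refine ⟨fun f hf _ hp θ => ?_, fun f hf he θ _ hε => measure_min_one_inv_le_le hf (he θ) hε⟩
  calc ∫⁻ ω, ENNReal.ofReal κ * f ω ^ (κ - 1) ∂(P θ)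
      ≤ ∫⁻ u in Ioo 0 1, ENNReal.ofReal κ * ENNReal.ofReal u ^ (κ - 1) :=
        lintegral_comp_le_setLIntegral_Ioo_of_antitone hf (hp θ)
          (antitone_mul_rpow_sub_one hκ.2 _)
    _ = 1 := setLIntegral_Ioo_zero_one_mul_rpow_sub_one hκ.1
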